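/- arXiv:2507.04731 — 7 statements merged into one kernel-verified Lean document; each statement's English description precedes it below -/
import Mathlib

section
/- Assume every matrix A_i (i = 1,…,m) is invertible. Then the reachable set R = ∪_π R(π) (union over all finite switching sequences π) is equal to the linear subspace V_n, where V_1 = Σ_{i=1}^m Im(B_i) and V_{k+1} = V_k + Σ_{i=1}^m A_i V_k; in particular, R is a linear subspace of ℝ^n. -/
/-!
Let `π₀` be a switching sequence whose reachable space `U = R(π₀)` has maximal dimension, and let
`T` be the product of the `A_i` along `π₀`, invertible by hypothesis. For every `σ`,
`R(σ π₀) = T R(σ) + U` contains `U`, so maximality gives `T R(σ) ⊆ U`; for `σ = π₀` this says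
`T U = U`, hence `R(σ) ⊆ U`. Thus `U` contains every reachable space, and since
`R(π₀ i) = A_i U + Im B_i ⊆ U` it contains every `V_k`. Conversely `R(π) ⊆ V_{|π|} ⊆ V_n`: the
`V_k` are the iterates of an inflationary map on the subspaces of `ℝⁿ`, so they stop growing after
at most `n` steps.
-/

/-- Reachable space of a discrete-time switched linear control system
`x_k = A_{i_k} x_{k-1} + B_{i_k} u_k` along the switching sequence `π`
(the head of the list is the first applied mode):
`R(ε) = {0}` and `R(π' i) = A_i R(π') + Im(B_i)`. -/
def reach {n m : ℕ} (A : Fin m → Matrix (Fin n) (Fin n) ℝ) {q : Fin m → ℕ}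
    (B : ∀ i, Matrix (Fin n) (Fin (q i)) ℝ) (π : List (Fin m)) :
    Submodule ℝ (Fin n → ℝ) :=
  π.foldl (fun S i =>
    Submodule.map (Matrix.mulVecLin (A i)) S ⊔ LinearMap.range (Matrix.mulVecLin (B i))) ⊥

/-- The subspaces `V_k`: `V_0 = {0}`, `V_1 = Σ_i Im B_i`, and
`V_{k+1} = V_k + Σ_i A_i V_k` for `k ≥ 1`. -/
def Vsp {n m : ℕ} (A : Fin m → Matrix (Fin n) (Fin n) ℝ) {q : Fin m → ℕ}
    (B : ∀ i, Matrix (Fin n) (Fin (q i)) ℝ) : ℕ → Submodule ℝ (Fin n → ℝ)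
  | 0 => ⊥
  | 1 => ⨆ i, LinearMap.range (Matrix.mulVecLin (B i))
  | (k + 2) => Vsp A B (k + 1) ⊔
      ⨆ i, Submodule.map (Matrix.mulVecLin (A i)) (Vsp A B (k + 1))

open Module Submodule

theorem Submodule.iterate_add_finrank_eq {K V : Type*} [DivisionRing K] [AddCommGroup V]
    [Module K V] [FiniteDimensional K V] {g : Submodule K V → Submodule K V} (hg : id ≤ g)
    (S : Submodule K V) (j : ℕ) : g^[finrank K V + j] S = g^[finrank K V] S := by
  set N := finrank K V
  by_cases hfix : ∃ k ≤ N, g (g^[k] S) = g^[k] S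
  · obtain ⟨k, hkN, hk⟩ := hfix
    have stable : ∀ l, k ≤ l → g^[l] S = g^[k] S := fun l hkl => by
      rw [← Nat.sub_add_cancel hkl, Function.iterate_add_apply, Function.iterate_fixed hk]
    rw [stable _ (by omega), stable _ hkN]
  · push Not at hfix
    have hdim : ∀ k ≤ N + 1, k ≤ finrank K (g^[k] S) := by
      intro k
      induction k with
      | zero => exact fun _ => Nat.zero_le _
      | succ k ih =>
        intro hk
        have hlt : g^[k] S < g^[k + 1] S := by
          rw [Function.iterate_succ_apply']
          exact lt_of_le_of_ne (hg _) (hfix k (by omega)).symm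
        have := finrank_lt_finrank_of_lt hlt
        have := ih (by omega)
        omega
    have := (hdim (N + 1) le_rfl).trans (finrank_le _)
    omega

theorem Submodule.iterate_le_iterate_finrank {K V : Type*} [DivisionRing K] [AddCommGroup V]
    [Module K V] [FiniteDimensional K V] {g : Submodule K V → Submodule K V} (hg : id ≤ g)
    (S : Submodule K V) (k : ℕ) : g^[k] S ≤ g^[finrank K V] S := by
  rcases le_or_gt k (finrank K V) with hk | hk
  · exact Function.monotone_iterate_of_id_le hg hk S
  · obtain ⟨j, rfl⟩ := Nat.exists_eq_add_of_le hk.le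
    exact (iterate_add_finrank_eq hg S j).le

section SwitchedSystem

variable {n m : ℕ} (A : Fin m → Matrix (Fin n) (Fin n) ℝ) {q : Fin m → ℕ}
  (B : ∀ i, Matrix (Fin n) (Fin (q i)) ℝ)

def reachStep (S : Submodule ℝ (Fin n → ℝ)) (i : Fin m) : Submodule ℝ (Fin n → ℝ) :=
  map (A i).mulVecLin S ⊔ LinearMap.range (B i).mulVecLin

theorem reach_eq_foldl (π : List (Fin m)) : reach A B π = π.foldl (reachStep A B) ⊥ := rfl

theorem reach_append_singleton (π : List (Fin m)) (i : Fin m) :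
    reach A B (π ++ [i]) = reachStep A B (reach A B π) i := by
  rw [reach_eq_foldl, List.foldl_append, ← reach_eq_foldl]
  rfl

/-- `transition A (i_1 ⋯ i_k) = A_{i_k} ⋯ A_{i_1}`. -/
def transition (σ : List (Fin m)) : Matrix (Fin n) (Fin n) ℝ :=
  σ.foldr (fun i M => M * A i) 1

theorem isUnit_transition (hA : ∀ i, IsUnit (A i)) (σ : List (Fin m)) :
    IsUnit (transition A σ) := by
  induction σ with
  | nil => exact isUnit_one
  | cons i σ ih => exact ih.mul (hA i)

theorem foldl_reachStep (σ : List (Fin m)) (S : Submodule ℝ (Fin n → ℝ)) :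
    σ.foldl (reachStep A B) S = map (transition A σ).mulVecLin S ⊔ reach A B σ := by
  induction σ generalizing S with
  | nil => simp [transition, reach]
  | cons i σ ih =>
    rw [reach_eq_foldl, List.foldl_cons, List.foldl_cons, ih, ih]
    simp only [reachStep, transition, List.foldr_cons, Submodule.map_bot, bot_sup_eq,
      Submodule.map_sup, Matrix.mulVecLin_mul, map_comp, sup_assoc]

theorem reach_append (π σ : List (Fin m)) :
    reach A B (π ++ σ) = map (transition A σ).mulVecLin (reach A B π) ⊔ reach A B σ := by
  rw [reach_eq_foldl, List.foldl_append, ← reach_eq_foldl, foldl_reachStep]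

theorem reach_le_reach_append (π σ : List (Fin m)) : reach A B σ ≤ reach A B (π ++ σ) := by
  rw [reach_append]
  exact le_sup_right

def vspStep (S : Submodule ℝ (Fin n → ℝ)) : Submodule ℝ (Fin n → ℝ) :=
  S ⊔ (⨆ i, LinearMap.range (B i).mulVecLin) ⊔ ⨆ i, map (A i).mulVecLin S

theorem le_vspStep : id ≤ vspStep A B := fun _ => le_sup_left.trans le_sup_left

theorem vspStep_mono : Monotone (vspStep A B) := fun _ _ h =>
  sup_le_sup (sup_le_sup_right h _) (iSup_mono fun _ => map_mono h)

theorem reachStep_le_vspStep (S : Submodule ℝ (Fin n → ℝ)) (i : Fin m) :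
    reachStep A B S i ≤ vspStep A B S :=
  sup_le ((le_iSup (fun i => map (A i).mulVecLin S) i).trans le_sup_right)
    ((le_iSup (fun i => LinearMap.range (B i).mulVecLin) i).trans
      (le_sup_right.trans le_sup_left))

theorem vspStep_le_iff {U : Submodule ℝ (Fin n → ℝ)} :
    vspStep A B U ≤ U ↔ ∀ i, reachStep A B U i ≤ U := by
  simp only [vspStep, reachStep, sup_le_iff, iSup_le_iff, le_rfl, true_and, forall_and]
  exact and_comm

theorem Vsp_one_le (k : ℕ) : Vsp A B 1 ≤ Vsp A B (k + 1) := by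
  induction k with
  | zero => exact le_rfl
  | succ k ih => exact ih.trans le_sup_left

theorem Vsp_eq_iterate (k : ℕ) : Vsp A B k = (vspStep A B)^[k] ⊥ := by
  induction k with
  | zero => rfl
  | succ k ih =>
    rw [Function.iterate_succ_apply', ← ih]
    cases k with
    | zero => simp [vspStep, Vsp]
    | succ k =>
      have hB : (⨆ i, LinearMap.range (B i).mulVecLin) ≤ Vsp A B (k + 1) := Vsp_one_le A B k
      rw [vspStep, sup_eq_left.mpr hB]
      rfl

theorem Vsp_le_Vsp_dim (k : ℕ) : Vsp A B k ≤ Vsp A B n := by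
  simpa only [Vsp_eq_iterate, finrank_fin_fun] using
    iterate_le_iterate_finrank (le_vspStep A B) ⊥ k

theorem Vsp_le_of_vspStep_le {U : Submodule ℝ (Fin n → ℝ)} (hU : vspStep A B U ≤ U) (k : ℕ) :
    Vsp A B k ≤ U := by
  induction k with
  | zero => exact bot_le
  | succ k ih =>
    rw [Vsp_eq_iterate, Function.iterate_succ_apply', ← Vsp_eq_iterate]
    exact (vspStep_mono A B ih).trans hU

theorem reach_le_Vsp_length (π : List (Fin m)) : reach A B π ≤ Vsp A B π.length := by
  induction π using List.reverseRecOn with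
  | nil => exact bot_le
  | append_singleton π i ih =>
    rw [reach_append_singleton, List.length_append, List.length_singleton, Vsp_eq_iterate,
      Function.iterate_succ_apply', ← Vsp_eq_iterate]
    exact (reachStep_le_vspStep A B _ i).trans (vspStep_mono A B ih)

theorem reach_le_Vsp_dim (π : List (Fin m)) : reach A B π ≤ Vsp A B n :=
  (reach_le_Vsp_length A B π).trans (Vsp_le_Vsp_dim A B _)

theorem exists_finrank_reach_max :
    ∃ π₀ : List (Fin m), ∀ π, finrank ℝ (reach A B π) ≤ finrank ℝ (reach A B π₀) := by
  have hbdd : BddAbove (Set.range fun π => finrank ℝ (reach A B π)) :=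
    ⟨finrank ℝ (Fin n → ℝ), by rintro _ ⟨π, rfl⟩; exact finrank_le _⟩
  obtain ⟨π₀, hπ₀⟩ := Nat.sSup_mem (Set.range_nonempty _) hbdd
  exact ⟨π₀, fun π => (le_csSup hbdd ⟨π, rfl⟩).trans hπ₀.ge⟩

theorem reach_le_of_finrank_max (hA : ∀ i, IsUnit (A i)) {π₀ : List (Fin m)}
    (hmax : ∀ π, finrank ℝ (reach A B π) ≤ finrank ℝ (reach A B π₀)) (σ : List (Fin m)) :
    reach A B σ ≤ reach A B π₀ := by
  set M := (transition A π₀).mulVecLin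
  have hM : Function.Injective M :=
    Matrix.mulVec_injective_iff_isUnit.mpr (isUnit_transition A hA π₀)
  -- `R(σ π₀)` contains `R(π₀)` and is no larger, so it equals `R(π₀)`
  have hmap : ∀ σ, map M (reach A B σ) ≤ reach A B π₀ := fun σ => by
    rw [eq_of_le_of_finrank_le (reach_le_reach_append A B σ π₀) (hmax _), reach_append]
    exact le_sup_left
  have hfix : map M (reach A B π₀) = reach A B π₀ :=
    eq_of_le_of_finrank_le (hmap π₀) ((equivMapOfInjective M hM _).finrank_eq.le)
  rw [← map_le_map_iff_of_injective hM, hfix]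
  exact hmap σ

end SwitchedSystem

theorem stmt1_general {n m : ℕ}
    (A : Fin m → Matrix (Fin n) (Fin n) ℝ) {q : Fin m → ℕ}
    (B : ∀ i, Matrix (Fin n) (Fin (q i)) ℝ)
    (hA : ∀ i, IsUnit (A i)) :
    (⋃ π : List (Fin m), (reach A B π : Set (Fin n → ℝ))) = ↑(Vsp A B n) := by
  obtain ⟨π₀, hmax⟩ := exists_finrank_reach_max A B
  have hle := reach_le_of_finrank_max A B hA hmax
  have hinv : vspStep A B (reach A B π₀) ≤ reach A B π₀ :=
    (vspStep_le_iff A B).mpr fun i => reach_append_singleton A B π₀ i ▸ hle (π₀ ++ [i])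
  have hU : reach A B π₀ = Vsp A B n :=
    le_antisymm (reach_le_Vsp_dim A B π₀) (Vsp_le_of_vspStep_le A B hinv n)
  refine Set.Subset.antisymm (Set.iUnion_subset fun σ => ?_) ?_
  · exact hU ▸ hle σ
  · exact hU ▸ Set.subset_iUnion (fun π => (reach A B π : Set (Fin n → ℝ))) π₀

/-- If all `A_i` are invertible, the reachable set equals the subspace `V_n`. -/
theorem stmt1 {n m : ℕ} (hn : 1 ≤ n) (hm : 1 ≤ m)
    (A : Fin m → Matrix (Fin n) (Fin n) ℝ) {q : Fin m → ℕ}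
    (B : ∀ i, Matrix (Fin n) (Fin (q i)) ℝ)
    (hA : ∀ i, IsUnit (A i)) :
    (⋃ π : List (Fin m), (reach A B π : Set (Fin n → ℝ))) = ↑(Vsp A B n) :=
  stmt1_general A B hA
end

section
/- Assume every matrix A_i (i = 1,…,m) is invertible. Then the system is controllable (i.e., ∪_π R(π) = ℝ^n) if and only if span{ A_{i_k}⋯A_{i_2} b : 1 ≤ k ≤ n, (i_1,…,i_k) ∈ {1,…,m}^k, b ∈ Im(B_{i_1}) } = ℝ^n (with the convention that for k = 1 the vector is b ∈ Im(B_{i_1}) itself). -/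
/-!
The span `W` of the words of length `< n` in the `A i` applied to the input spaces `Im B_i` is
the `n`-th iterate from `⊥` of the monotone map `S ↦ Σ Im B_i + Σ A_i S`; by a dimension count
these iterates stabilise within `n` steps, so `W` is the smallest subspace containing every
`Im B_i` and invariant under every `A i`. Every reachable space lies in `W`, so controllability
forces `W = ℝⁿ`. Conversely, when the `A i` are invertible, a switching word of maximal reachable
dimension already reaches such an invariant subspace, which then contains `W`.
-/

open Module Submodule Function

theorem Submodule.isFixedPt_iterate_finrank {K V : Type*} [DivisionRing K] [AddCommGroup V]
    [Module K V] [FiniteDimensional K V] {F : Submodule K V → Submodule K V} (hF : Monotone F)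
    {S : Submodule K V} (hS : S ≤ F S) : IsFixedPt F (F^[finrank K V] S) := by
  have hle (k : ℕ) : F^[k] S ≤ F^[k + 1] S := hF.monotone_iterate_of_le_map hS k.le_succ
  have hstable (k : ℕ) (h : F^[k + 1] S = F^[k] S) : F^[k + 2] S = F^[k + 1] S :=
    calc F^[k + 2] S = F (F^[k + 1] S) := iterate_succ_apply' F (k + 1) S
      _ = F (F^[k] S) := congrArg F h
      _ = F^[k + 1] S := (iterate_succ_apply' F k S).symm
  have hlt (k : ℕ) (h : F^[k + 1] S ≠ F^[k] S) : finrank K (F^[k] S) < finrank K (F^[k + 1] S) :=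
    finrank_lt_finrank_of_lt (lt_of_le_of_ne (hle k) (Ne.symm h))
  -- once the chain stalls it stays constant, so before that it gains a dimension at every step
  have hgrow (k : ℕ) (h : F^[k + 1] S ≠ F^[k] S) : k + 1 ≤ finrank K (F^[k + 1] S) := by
    induction k with
    | zero => have := hlt 0 h; omega
    | succ k ih => have := ih (fun h' => h (hstable k h')); have := hlt (k + 1) h; omega
  by_contra h
  have := hgrow _ (by rw [iterate_succ_apply']; exact h)
  have := finrank_le (F^[finrank K V + 1] S)
  omega

namespace SwitchedLinearSystem

variable {K V ι : Type*} [DivisionRing K] [AddCommGroup V] [Module K V]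
  (A : ι → Module.End K V) (U : ι → Submodule K V)

def reachStep (S : Submodule K V) (i : ι) : Submodule K V := S.map (A i) ⊔ U i

def reachSpace (π : List ι) : Submodule K V := π.foldl (reachStep A U) ⊥

def wordMap (l : List ι) : Module.End K V := (l.map A).reverse.prod

def kalmanGens (k : ℕ) : Set V :=
  {x | ∃ (l : List ι) (i : ι) (b : V), l.length + 1 ≤ k ∧ b ∈ U i ∧ x = wordMap A l b}

def kalmanStep (S : Submodule K V) : Submodule K V := (⨆ i, U i) ⊔ ⨆ i, S.map (A i)

variable {A U}

theorem kalmanStep_mono : Monotone (kalmanStep A U) := fun _ _ h =>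
  sup_le_sup_left (iSup_mono fun _ => map_mono h) _

theorem kalmanStep_le_iff {W : Submodule K V} :
    kalmanStep A U W ≤ W ↔ ∀ i, W.map (A i) ≤ W ∧ U i ≤ W := by
  simp only [kalmanStep, sup_le_iff, iSup_le_iff]
  exact ⟨fun h i => ⟨h.2 i, h.1 i⟩, fun h => ⟨fun i => (h i).2, fun i => (h i).1⟩⟩

theorem wordMap_cons (i : ι) (l : List ι) : wordMap A (i :: l) = wordMap A l * A i := by
  simp [wordMap]

theorem wordMap_concat (l : List ι) (i : ι) : wordMap A (l ++ [i]) = A i * wordMap A l := by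
  simp [wordMap]

theorem kalmanGens_succ (k : ℕ) :
    kalmanGens A U (k + 1) = (⋃ i, (U i : Set V)) ∪ ⋃ i, A i '' kalmanGens A U k := by
  ext x
  simp only [kalmanGens, Set.mem_union, Set.mem_iUnion, Set.mem_image, Set.mem_ofPred_eq,
    SetLike.mem_coe]
  constructor
  · rintro ⟨l, i, b, hl, hb, rfl⟩
    rcases l.eq_nil_or_concat with rfl | ⟨l, j, rfl⟩
    · exact Or.inl ⟨i, by simpa [wordMap] using hb⟩
    · rw [List.concat_eq_append, List.length_append, List.length_singleton] at hl
      refine Or.inr ⟨j, _, ⟨l, i, b, by omega, hb, rfl⟩, ?_⟩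
      rw [List.concat_eq_append, wordMap_concat, Module.End.mul_apply]
  · rintro (⟨i, hx⟩ | ⟨j, _, ⟨l, i, b, hl, hb, rfl⟩, rfl⟩)
    · exact ⟨[], i, x, by simp, hx, by simp [wordMap]⟩
    · refine ⟨l ++ [j], i, b, by simpa using hl, hb, ?_⟩
      rw [wordMap_concat, Module.End.mul_apply]

theorem span_kalmanGens (k : ℕ) :
    span K (kalmanGens A U k) = (kalmanStep A U)^[k] ⊥ := by
  induction k with
  | zero =>
    have : kalmanGens A U 0 = ∅ := Set.eq_empty_of_forall_notMem fun _ ⟨_, _, _, h, _⟩ => by omega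
    rw [this, span_empty, iterate_zero_apply]
  | succ k ih =>
    rw [kalmanGens_succ, span_union, span_iUnion, span_iUnion, iterate_succ_apply', ← ih]
    simp only [span_eq, span_image, kalmanStep]

theorem reachStep_le_kalmanStep {S W : Submodule K V} (h : S ≤ W) (i : ι) :
    reachStep A U S i ≤ kalmanStep A U W :=
  sup_le (le_sup_of_le_right (le_iSup_of_le i (map_mono h))) (le_sup_of_le_left (le_iSup U i))

theorem reachSpace_le_of_kalmanStep_le {W : Submodule K V} (hW : kalmanStep A U W ≤ W)
    (π : List ι) : reachSpace A U π ≤ W := by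
  suffices ∀ S ≤ W, π.foldl (reachStep A U) S ≤ W from this ⊥ bot_le
  induction π with
  | nil => exact fun S hS => hS
  | cons i π ih => exact fun S hS => ih _ ((reachStep_le_kalmanStep hS i).trans hW)

theorem reachSpace_append (w u : List ι) :
    reachSpace A U (w ++ u) = u.foldl (reachStep A U) (reachSpace A U w) :=
  List.foldl_append

theorem foldl_reachStep_mono {S T : Submodule K V} (h : S ≤ T) (u : List ι) :
    u.foldl (reachStep A U) S ≤ u.foldl (reachStep A U) T := by
  induction u generalizing S T with
  | nil => exact h
  | cons i u ih => exact ih (sup_le_sup_right (map_mono h) _)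

theorem reachSpace_le_append (w u : List ι) : reachSpace A U u ≤ reachSpace A U (w ++ u) := by
  rw [reachSpace_append]
  exact foldl_reachStep_mono bot_le u

theorem map_wordMap_le_foldl (S : Submodule K V) (u : List ι) :
    S.map (wordMap A u) ≤ u.foldl (reachStep A U) S := by
  induction u generalizing S with
  | nil => simp [wordMap, Module.End.one_eq_id]
  | cons i u ih =>
    rw [wordMap_cons, Module.End.mul_eq_comp, map_comp]
    exact (ih _).trans (foldl_reachStep_mono le_sup_left u)

theorem isUnit_wordMap (hA : ∀ i, IsUnit (A i)) (l : List ι) : IsUnit (wordMap A l) :=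
  List.prod_isUnit fun _ hf => by
    obtain ⟨i, -, rfl⟩ := List.mem_map.mp (List.mem_reverse.mp hf)
    exact hA i

theorem finrank_map_of_isUnit {f : Module.End K V} (hf : IsUnit f) (S : Submodule K V) :
    finrank K (S.map f) = finrank K S :=
  (S.equivMapOfInjective f ((Module.End.isUnit_iff f).mp hf).injective).finrank_eq.symm

variable [FiniteDimensional K V]

/- Take `w` of maximal reachable dimension. Invertibility makes `reachSpace (w ++ u)` the image of
`M = reachSpace w` under `wordMap u`, while `reachSpace (u ++ w) = M`; comparing the two for
`u = i :: w` shows that `M` is `A i`-invariant. -/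
theorem exists_kalmanStep_reachSpace_le (hA : ∀ i, IsUnit (A i)) :
    ∃ w, kalmanStep A U (reachSpace A U w) ≤ reachSpace A U w := by
  obtain ⟨w, hw⟩ : ∃ w, ∀ u, finrank K (reachSpace A U u) ≤ finrank K (reachSpace A U w) := by
    have hbdd : BddAbove (Set.range fun u => finrank K (reachSpace A U u)) :=
      ⟨finrank K V, Set.forall_mem_range.mpr fun _ => finrank_le _⟩
    obtain ⟨w, hw⟩ := Nat.sSup_mem (Set.range_nonempty _) hbdd
    exact ⟨w, fun u => (le_csSup hbdd ⟨u, rfl⟩).trans_eq hw.symm⟩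
  set M := reachSpace A U w
  have hinj : Injective (map (wordMap A w)) :=
    map_injective_of_injective ((Module.End.isUnit_iff _).mp (isUnit_wordMap hA w)).injective
  have happend (u : List ι) : reachSpace A U (w ++ u) = M.map (wordMap A u) := by
    refine (eq_of_le_of_finrank_le ?_ ?_).symm
    · rw [reachSpace_append]
      exact map_wordMap_le_foldl M u
    · rw [finrank_map_of_isUnit (isUnit_wordMap hA u)]
      exact hw _
  have hprepend (u : List ι) : reachSpace A U (u ++ w) = M :=
    (eq_of_le_of_finrank_le (reachSpace_le_append u w) (hw _)).symm
  have hAM (i : ι) : M.map (A i) = M := hinj <| by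
    rw [← map_comp, ← Module.End.mul_eq_comp, ← wordMap_cons, ← happend, ← happend, hprepend,
      show w ++ i :: w = (w ++ [i]) ++ w by simp, hprepend]
  refine ⟨w, kalmanStep_le_iff.mpr fun i => ⟨(hAM i).le, ?_⟩⟩
  have hstep : reachStep A U M i = M :=
    calc reachStep A U M i = reachSpace A U (w ++ [i]) := (reachSpace_append w [i]).symm
      _ = M.map (A i) := by rw [happend]; simp [wordMap]
      _ = M := hAM i
  exact le_sup_right.trans hstep.le

theorem iUnion_reachSpace_eq_univ_iff (hA : ∀ i, IsUnit (A i)) :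
    (⋃ π, (reachSpace A U π : Set V)) = Set.univ ↔
      span K (kalmanGens A U (finrank K V)) = ⊤ := by
  set W := (kalmanStep A U)^[finrank K V] ⊥
  have hW : kalmanStep A U W ≤ W := (isFixedPt_iterate_finrank kalmanStep_mono bot_le).le
  rw [span_kalmanGens, Set.eq_univ_iff_forall, eq_top_iff']
  constructor
  · intro h x
    obtain ⟨π, hx⟩ := Set.mem_iUnion.mp (h x)
    exact reachSpace_le_of_kalmanStep_le hW π hx
  · intro h x
    obtain ⟨w, hw⟩ := exists_kalmanStep_reachSpace_le (U := U) hA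
    have hWw : W ≤ reachSpace A U w :=
      (kalmanStep_mono.iterate _ bot_le).trans (kalmanStep_mono.antitone_iterate_of_map_le hw
        (Nat.zero_le _))
    exact Set.mem_iUnion.mpr ⟨w, hWw (h x)⟩

end SwitchedLinearSystem

open SwitchedLinearSystem

theorem stmt2_general {n m : ℕ}
    (A : Fin m → Matrix (Fin n) (Fin n) ℝ) {q : Fin m → ℕ}
    (B : ∀ i, Matrix (Fin n) (Fin (q i)) ℝ)
    (hA : ∀ i, IsUnit (A i)) :
    (⋃ π : List (Fin m), (reach A B π : Set (Fin n → ℝ))) = Set.univ ↔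
      Submodule.span ℝ {x : Fin n → ℝ | ∃ (l : List (Fin m)) (i : Fin m) (b : Fin n → ℝ),
        l.length + 1 ≤ n ∧ b ∈ LinearMap.range (Matrix.mulVecLin (B i)) ∧
        x = Matrix.mulVec ((l.map A).reverse.prod) b} = ⊤ := by
  let A' i := Matrix.toLinAlgEquiv' (A i)
  let U i := LinearMap.range (B i).mulVecLin
  have hword (l : List (Fin m)) :
      wordMap A' l = Matrix.toLinAlgEquiv' (l.map A).reverse.prod := by
    simp [wordMap, A', map_list_prod, List.map_reverse, comp_def]
  have hgens : kalmanGens A' U (finrank ℝ (Fin n → ℝ)) =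
      {x | ∃ (l : List (Fin m)) (i : Fin m) (b : Fin n → ℝ),
        l.length + 1 ≤ n ∧ b ∈ LinearMap.range (Matrix.mulVecLin (B i)) ∧
        x = Matrix.mulVec ((l.map A).reverse.prod) b} := by
    simp only [kalmanGens, hword, finrank_fin_fun, Matrix.toLinAlgEquiv'_apply, U]
  rw [← hgens]
  -- `reach A B` unfolds to `reachSpace A' U`
  exact iUnion_reachSpace_eq_univ_iff fun i => (hA i).map Matrix.toLinAlgEquiv'

/-- Kalman-type controllability criterion for switched linear control systems. -/
theorem stmt2 {n m : ℕ} (hn : 1 ≤ n) (hm : 1 ≤ m)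
    (A : Fin m → Matrix (Fin n) (Fin n) ℝ) {q : Fin m → ℕ}
    (B : ∀ i, Matrix (Fin n) (Fin (q i)) ℝ)
    (hA : ∀ i, IsUnit (A i)) :
    (⋃ π : List (Fin m), (reach A B π : Set (Fin n → ℝ))) = Set.univ ↔
      Submodule.span ℝ {x : Fin n → ℝ | ∃ (l : List (Fin m)) (i : Fin m) (b : Fin n → ℝ),
        l.length + 1 ≤ n ∧ b ∈ LinearMap.range (Matrix.mulVecLin (B i)) ∧
        x = Matrix.mulVec ((l.map A).reverse.prod) b} = ⊤ :=
  stmt2_general A B hA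
end

section
/- Assume every matrix A_i (i = 1,…,m) is invertible. If the switched linear control system is controllable, then there exists a controllable switching sequence π (i.e., R(π) = ℝ^n) whose length is at most n(n+1)/2. -/
open Module MeasureTheory

theorem Submodule.iUnion_ne_univ_of_countable {E ι : Type*} [NormedAddCommGroup E]
    [NormedSpace ℝ E] [FiniteDimensional ℝ E] [Countable ι] (p : ι → Submodule ℝ E)
    (hp : ∀ i, p i ≠ ⊤) : ⋃ i, (p i : Set E) ≠ Set.univ := by
  borelize E
  intro h
  have hnull := measure_iUnion_null (μ := Measure.addHaar) fun i =>
    Measure.addHaar_submodule _ _ (hp i)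
  rw [h] at hnull
  exact isOpen_univ.measure_ne_zero _ Set.univ_nonempty hnull

theorem Submodule.exists_eq_succ_of_monotone {K V : Type*} [DivisionRing K] [AddCommGroup V]
    [Module K V] [FiniteDimensional K V] {f : ℕ → Submodule K V} (hf : Monotone f) {d : ℕ}
    (hd : finrank K (f (d + 1)) ≤ d) : ∃ t ≤ d, f t = f (t + 1) := by
  by_contra! hstrict
  have hgrow : ∀ t ≤ d + 1, t ≤ finrank K (f t) := by
    intro t
    induction t with
    | zero => intro _; exact Nat.zero_le _
    | succ t ih =>
      intro ht
      have hlt := Submodule.finrank_lt_finrank_of_lt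
        (lt_of_le_of_ne (hf (Nat.le_add_right t 1)) (hstrict t (by omega)))
      have := ih (by omega)
      omega
  have := hgrow (d + 1) le_rfl
  omega

namespace SwitchedLinearSystem

section Algebraic

variable {K V ι : Type*} [Field K] [AddCommGroup V] [Module K V]
  (e : ι → V ≃ₗ[K] V) (b : ι → Submodule K V)

def reachable (π : List ι) : Submodule K V :=
  π.foldl (fun S i => S.map (e i : V →ₗ[K] V) ⊔ b i) ⊥

def flow : List ι → V ≃ₗ[K] V
  | [] => LinearEquiv.refl K V
  | i :: σ => (e i).trans (flow σ)

theorem foldl_eq_map_flow_sup_reachable (σ : List ι) (S : Submodule K V) :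
    σ.foldl (fun S i => S.map (e i : V →ₗ[K] V) ⊔ b i) S
      = S.map (flow e σ : V →ₗ[K] V) ⊔ reachable e b σ := by
  induction σ generalizing S with
  | nil => simp [flow, reachable]
  | cons i σ ih =>
    have hcons :
        reachable e b (i :: σ) = (b i).map (flow e σ : V →ₗ[K] V) ⊔ reachable e b σ := by
      rw [reachable, List.foldl_cons, ih, Submodule.map_bot, bot_sup_eq]
    rw [List.foldl_cons, ih, hcons, Submodule.map_sup, ← sup_assoc, flow, LinearEquiv.coe_trans,
      Submodule.map_comp]

theorem reachable_append (π σ : List ι) :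
    reachable e b (π ++ σ) = (reachable e b π).map (flow e σ : V →ₗ[K] V) ⊔ reachable e b σ := by
  rw [reachable, List.foldl_append, ← reachable, foldl_eq_map_flow_sup_reachable]

theorem reachable_cons (i : ι) (σ : List ι) :
    reachable e b (i :: σ) = (b i).map (flow e σ : V →ₗ[K] V) ⊔ reachable e b σ := by
  rw [reachable, List.foldl_cons, foldl_eq_map_flow_sup_reachable, Submodule.map_bot, bot_sup_eq]

def pullback (σ : List ι) : Submodule K V :=
  (reachable e b σ).comap (flow e σ : V →ₗ[K] V)

theorem pullback_nil : pullback e b [] = ⊥ := by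
  simp [pullback, reachable]

theorem pullback_cons (i : ι) (σ : List ι) :
    pullback e b (i :: σ) = (b i ⊔ pullback e b σ).comap (e i : V →ₗ[K] V) := by
  rw [pullback, reachable_cons, flow, LinearEquiv.coe_trans, Submodule.comap_comp, pullback,
    Submodule.comap_equiv_eq_map_symm (flow e σ), Submodule.comap_equiv_eq_map_symm (flow e σ),
    Submodule.map_sup, ← Submodule.map_comp]
  simp

theorem pullback_le_iff (σ : List ι) (S : Submodule K V) :
    pullback e b σ ≤ S ↔ reachable e b σ ≤ S.map (flow e σ : V →ₗ[K] V) := by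
  rw [pullback, Submodule.comap_equiv_eq_map_symm, Submodule.map_le_iff_le_comap,
    ← Submodule.map_equiv_eq_comap_symm]

def pullbackStep (W : Submodule K V) : Submodule K V :=
  ⨆ i, (b i ⊔ W).comap (e i : V →ₗ[K] V)

theorem pullbackStep_mono : Monotone (pullbackStep e b) :=
  fun _ _ h => iSup_mono fun _ => Submodule.comap_mono (sup_le_sup_left h _)

theorem pullback_le_iterate_pullbackStep (σ : List ι) :
    pullback e b σ ≤ (pullbackStep e b)^[σ.length] ⊥ := by
  induction σ with
  | nil => simp [pullback_nil]
  | cons i σ ih =>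
    rw [pullback_cons, List.length_cons, Function.iterate_succ_apply']
    exact (Submodule.comap_mono (sup_le_sup_left ih _)).trans
      (le_iSup (fun j => (b j ⊔ _).comap (e j : V →ₗ[K] V)) i)

theorem iterate_pullbackStep_le {t : ℕ} {S : Submodule K V}
    (h : ∀ σ : List ι, σ.length ≤ t → pullback e b σ ≤ S) :
    (pullbackStep e b)^[t] ⊥ ≤ S := by
  induction t generalizing S with
  | zero => exact bot_le
  | succ t ih =>
    rw [Function.iterate_succ_apply']
    refine iSup_le fun i => ?_
    rw [Submodule.comap_equiv_eq_map_symm, Submodule.map_le_iff_le_comap]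
    refine sup_le ?_ (ih fun σ hσ => ?_)
    · have := h [i] (by simp)
      rwa [pullback_cons, pullback_nil, sup_bot_eq, Submodule.comap_equiv_eq_map_symm,
        Submodule.map_le_iff_le_comap] at this
    · have := h (i :: σ) (by simpa using hσ)
      rw [pullback_cons, Submodule.comap_equiv_eq_map_symm, Submodule.map_le_iff_le_comap] at this
      exact le_sup_right.trans this

theorem pullback_le_of_forall_length_le [FiniteDimensional K V] {S : Submodule K V}
    (h : ∀ σ : List ι, σ.length ≤ finrank K S + 1 → pullback e b σ ≤ S) (σ : List ι) :
    pullback e b σ ≤ S := by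
  set chain := fun t => (pullbackStep e b)^[t] ⊥
  have hmono : Monotone chain :=
    (pullbackStep_mono e b).monotone_iterate_of_le_map bot_le
  have hchain : ∀ t ≤ finrank K S + 1, chain t ≤ S := fun t ht =>
    iterate_pullbackStep_le e b fun σ hσ => h σ (hσ.trans ht)
  obtain ⟨t, ht, hfix⟩ := Submodule.exists_eq_succ_of_monotone hmono
    (Submodule.finrank_mono (hchain _ le_rfl))
  have hstable : ∀ s, chain s ≤ chain t := by
    intro s
    rcases le_total s t with hst | hts
    · exact hmono hst
    · have hfix' : pullbackStep e b (chain t) = chain t :=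
        (Function.iterate_succ_apply' _ _ _).symm.trans hfix.symm
      simp only [chain]
      rw [← Nat.sub_add_cancel hts, Function.iterate_add_apply,
        Function.iterate_fixed hfix']
  exact (pullback_le_iterate_pullbackStep e b σ).trans ((hstable _).trans (hchain t (by omega)))

end Algebraic

section Real

variable {V ι : Type*} [NormedAddCommGroup V] [NormedSpace ℝ V] [FiniteDimensional ℝ V]
  [Countable ι] (e : ι → V ≃ₗ[ℝ] V) (b : ι → Submodule ℝ V)

theorem exists_finrank_lt_reachable_append
    (hctrl : ⋃ π, (reachable e b π : Set V) = Set.univ) {π : List ι}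
    (hπ : reachable e b π ≠ ⊤) :
    ∃ σ : List ι, σ.length ≤ finrank ℝ (reachable e b π) + 1 ∧
      finrank ℝ (reachable e b π) < finrank ℝ (reachable e b (π ++ σ)) := by
  by_contra! hstuck
  set S := reachable e b π
  have hshort : ∀ σ : List ι, σ.length ≤ finrank ℝ S + 1 → pullback e b σ ≤ S := by
    intro σ hσ
    have hmap : S.map (flow e σ : V →ₗ[ℝ] V) ≤ reachable e b (π ++ σ) := by
      rw [reachable_append]; exact le_sup_left
    have heq := Submodule.eq_of_le_of_finrank_le hmap (by
      rw [LinearEquiv.finrank_map_eq]; exact hstuck σ hσ)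
    rw [pullback_le_iff, heq, reachable_append]
    exact le_sup_right
  refine Submodule.iUnion_ne_univ_of_countable (fun σ : List ι => S.map (flow e σ : V →ₗ[ℝ] V))
    (fun σ => by simpa using hπ) (Set.eq_univ_of_univ_subset ?_)
  rw [← hctrl]
  exact Set.iUnion_mono fun σ =>
    (pullback_le_iff e b σ S).1 (pullback_le_of_forall_length_le e b hshort σ)

theorem exists_le_finrank_reachable_length_le
    (hctrl : ⋃ π, (reachable e b π : Set V) = Set.univ) {k : ℕ} (hk : k ≤ finrank ℝ V) :
    ∃ π : List ι, k ≤ finrank ℝ (reachable e b π) ∧ π.length ≤ k * (k + 1) / 2 := by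
  induction k with
  | zero => exact ⟨[], Nat.zero_le _, le_rfl⟩
  | succ k ih =>
    obtain ⟨π, hdim, hlen⟩ := ih (by omega)
    have hnext : (k + 1) * (k + 1 + 1) / 2 = k * (k + 1) / 2 + (k + 1) := by
      simpa [Nat.mul_comm] using Nat.triangle_succ (k + 1)
    by_cases hbig : k + 1 ≤ finrank ℝ (reachable e b π)
    · exact ⟨π, hbig, by omega⟩
    have hne : reachable e b π ≠ ⊤ := fun htop => by
      rw [htop, finrank_top] at hbig; omega
    obtain ⟨σ, hσ, hgrow⟩ := exists_finrank_lt_reachable_append e b hctrl hne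
    exact ⟨π ++ σ, by omega, by rw [List.length_append]; omega⟩

theorem exists_reachable_eq_top_length_le
    (hctrl : ⋃ π, (reachable e b π : Set V) = Set.univ) :
    ∃ π : List ι, reachable e b π = ⊤ ∧
      π.length ≤ finrank ℝ V * (finrank ℝ V + 1) / 2 := by
  obtain ⟨π, hdim, hlen⟩ := exists_le_finrank_reachable_length_le e b hctrl le_rfl
  exact ⟨π, Submodule.eq_top_of_finrank_eq (le_antisymm (Submodule.finrank_le _) hdim), hlen⟩

end Real

end SwitchedLinearSystem

theorem Matrix.mulVecLin_bijective_of_isUnit {n K : Type*} [Fintype n] [DecidableEq n] [Field K]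
    {A : Matrix n n K} (hA : IsUnit A) : Function.Bijective A.mulVecLin :=
  ⟨Matrix.mulVec_injective_iff_isUnit.2 hA, Matrix.mulVec_surjective_iff_isUnit.2 hA⟩

theorem stmt8_general {n m : ℕ}
    (A : Fin m → Matrix (Fin n) (Fin n) ℝ) {q : Fin m → ℕ}
    (B : ∀ i, Matrix (Fin n) (Fin (q i)) ℝ)
    (hA : ∀ i, IsUnit (A i))
    (hctrl : (⋃ π : List (Fin m), (reach A B π : Set (Fin n → ℝ))) = Set.univ) :
    ∃ π : List (Fin m), reach A B π = ⊤ ∧ π.length ≤ n * (n + 1) / 2 := by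
  let e i := LinearEquiv.ofBijective _ (Matrix.mulVecLin_bijective_of_isUnit (hA i))
  let b i := LinearMap.range (B i).mulVecLin
  have hreach : ∀ π, reach A B π = SwitchedLinearSystem.reachable e b π := fun _ => rfl
  simp only [hreach] at hctrl ⊢
  simpa only [Module.finrank_fin_fun] using
    SwitchedLinearSystem.exists_reachable_eq_top_length_le e b hctrl

/-- A controllable switched linear control system with invertible `A_i` admits a
controllable sequence of length at most `n(n+1)/2`. -/
theorem stmt8 {n m : ℕ} (hn : 1 ≤ n) (hm : 1 ≤ m)
    (A : Fin m → Matrix (Fin n) (Fin n) ℝ) {q : Fin m → ℕ}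
    (B : ∀ i, Matrix (Fin n) (Fin (q i)) ℝ)
    (hA : ∀ i, IsUnit (A i))
    (hctrl : (⋃ π : List (Fin m), (reach A B π : Set (Fin n → ℝ))) = Set.univ) :
    ∃ π : List (Fin m), reach A B π = ⊤ ∧ π.length ≤ n * (n + 1) / 2 :=
  stmt8_general A B hA hctrl
end

section
/- For all integers n, m with m > n ≥ 1 there exist invertible matrices A_1,…,A_m ∈ ℝ^{n×n} and matrices B_1,…,B_m (with one column each) such that the associated switched linear control system is controllable, there exists a controllable switching sequence of length n(n+1)/2, and no controllable switching sequence has length strictly smaller than n(n+1)/2. -/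
open Finset Equiv Submodule Matrix

lemma Equiv.Perm.isUnit_permMatrix {ι R : Type*} [Fintype ι] [DecidableEq ι] [Semiring R]
    (σ : Perm ι) : IsUnit (σ.permMatrix R) := by
  simpa using (Group.isUnit σ⁻¹).map (permMatrixHom (R := R))

lemma Matrix.range_mulVecLin_replicateCol {R m : Type*} [CommRing R] (v : m → R) :
    LinearMap.range (replicateCol (Fin 1) v).mulVecLin = R ∙ v := by
  rw [range_mulVecLin]
  exact congrArg (span R) (Set.range_const (c := v) (ι := Fin 1))

section CoordSubspace

variable (R : Type*) {ι : Type*} [CommRing R] [Fintype ι]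

def coordSubspace (T : Finset ι) : Submodule R (ι → R) :=
  span R (Pi.basisFun R ι '' T)

variable {R}

lemma coordSubspace_empty : coordSubspace R (∅ : Finset ι) = ⊥ := by
  rw [coordSubspace, coe_empty, Set.image_empty, span_empty]

lemma coordSubspace_univ : coordSubspace R (univ : Finset ι) = ⊤ := by
  rw [coordSubspace, coe_univ, Set.image_univ, (Pi.basisFun R ι).span_eq]

lemma coordSubspace_eq_top_iff [Nontrivial R] {T : Finset ι} :
    coordSubspace R T = ⊤ ↔ T = univ := by
  refine ⟨fun h => eq_univ_of_forall fun t => ?_, fun h => h ▸ coordSubspace_univ⟩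
  rw [← mem_coe, ← (Pi.basisFun R ι).self_mem_span_image, ← coordSubspace, h]
  exact mem_top

variable [DecidableEq ι]

lemma coordSubspace_insert (t : ι) (T : Finset ι) :
    coordSubspace R (insert t T) = coordSubspace R T ⊔ R ∙ Pi.single t 1 := by
  rw [coordSubspace, coe_insert, Set.image_insert_eq, span_insert, sup_comm, Pi.basisFun_apply,
    coordSubspace]

lemma map_permMatrix_coordSubspace (σ : Perm ι) (T : Finset ι) :
    (coordSubspace R T).map (σ.permMatrix R).mulVecLin = coordSubspace R (T.image σ.symm) := by
  rw [coordSubspace, map_span, ← Set.image_comp, coordSubspace, coe_image, ← Set.image_comp]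
  refine congrArg (span R) (Set.image_congr fun t _ => ?_)
  simp only [Function.comp_apply, Pi.basisFun_apply, mulVecLin_apply, permMatrix_mulVec,
    Pi.single_comp_equiv]

end CoordSubspace

lemma List.foldl_le_add_length {α β : Type*} (φ : α → ℕ) {f : α → β → α}
    (hf : ∀ a b, φ (f a b) ≤ φ a + 1) (l : List β) (a : α) :
    φ (l.foldl f a) ≤ φ a + l.length := by
  induction l generalizing a with
  | nil => simp
  | cons b l ih =>
    grw [foldl_cons, ih, hf, length_cons]
    omega

lemma Finset.sum_image_swap_le {α : Type*} [DecidableEq α] {w : α → ℕ} {a b : α}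
    (hba : w b ≤ w a) (hab : w a ≤ w b + 1) (T : Finset α) :
    ∑ t ∈ T.image (swap a b), w t ≤ ∑ t ∈ T, w t + 1 := by
  have hpt : ∀ t, w (swap a b t) ≤ w t + if t = b then 1 else 0 := by
    intro t
    rcases eq_or_ne t a with rfl | hta
    · by_cases h : t = b <;> simp_all
    rcases eq_or_ne t b with rfl | htb
    · simpa using hab
    · simp [swap_apply_of_ne_of_ne hta htb, htb]
  calc ∑ t ∈ T.image (swap a b), w t = ∑ t ∈ T, w (swap a b t) :=
        sum_image fun _ _ _ _ h => (swap a b).injective h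
    _ ≤ ∑ t ∈ T, (w t + if t = b then 1 else 0) := sum_le_sum fun t _ => hpt t
    _ ≤ ∑ t ∈ T, w t + 1 := by
        rw [sum_add_distrib, sum_ite_eq']
        split_ifs <;> simp

lemma Finset.sum_insert_le_add {α : Type*} [DecidableEq α] (w : α → ℕ) (a : α)
    (T : Finset α) :
    ∑ t ∈ insert a T, w t ≤ ∑ t ∈ T, w t + w a := by
  by_cases ha : a ∈ T
  · rw [insert_eq_of_mem ha]
    exact Nat.le_add_right _ _
  · rw [sum_insert ha, add_comm]

lemma Finset.image_swap_erase {α : Type*} [DecidableEq α] {F : Finset α} {a b : α}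
    (ha : a ∈ F) (hb : b ∈ F) : (F.erase a).image (swap a b) = F.erase b := by
  ext x
  rw [← coe_toEmbedding, ← map_eq_image, mem_map_equiv, symm_swap, mem_erase, mem_erase]
  rcases eq_or_ne x a with rfl | hxa
  · grind [swap_apply_left]
  rcases eq_or_ne x b with rfl | hxb
  · grind [swap_apply_right]
  · simp [swap_apply_of_ne_of_ne hxa hxb, hxa, hxb]

lemma Finset.sum_range_add_one (n : ℕ) : ∑ i ∈ range n, (i + 1) = n * (n + 1) / 2 := by
  rw [← add_zero (∑ i ∈ range n, (i + 1)), ← sum_range_succ' (fun i => i) n, sum_range_id,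
    Nat.add_sub_cancel, mul_comm]

section BubbleSystem

variable {k m : ℕ}

def adjSwap (j : Fin k) : Perm (Fin (k + 1)) :=
  swap j.castSucc j.succ

variable (k) in
def modeMatrix (i : Fin m) : Matrix (Fin (k + 1)) (Fin (k + 1)) ℝ :=
  if h : (i : ℕ) < k then (adjSwap ⟨i, h⟩).permMatrix ℝ else 1

variable (k) in
def inputMatrix (i : Fin m) : Matrix (Fin (k + 1)) (Fin 1) ℝ :=
  if (i : ℕ) < k then 0 else replicateCol (Fin 1) (Pi.single (Fin.last k) 1)

def supportStep (T : Finset (Fin (k + 1))) (i : Fin m) : Finset (Fin (k + 1)) :=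
  if h : (i : ℕ) < k then T.image (adjSwap ⟨i, h⟩) else insert (Fin.last k) T

lemma isUnit_modeMatrix (i : Fin m) : IsUnit (modeMatrix k i) := by
  unfold modeMatrix
  split_ifs
  exacts [Perm.isUnit_permMatrix _, isUnit_one]

lemma map_modeMatrix_sup_range_inputMatrix (T : Finset (Fin (k + 1))) (i : Fin m) :
    (coordSubspace ℝ T).map (modeMatrix k i).mulVecLin ⊔
        LinearMap.range (inputMatrix k i).mulVecLin = coordSubspace ℝ (supportStep T i) := by
  unfold modeMatrix inputMatrix supportStep
  split_ifs
  · rw [map_permMatrix_coordSubspace, adjSwap, symm_swap, mulVecLin_zero, LinearMap.range_zero,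
      sup_bot_eq]
  · rw [mulVecLin_one, Submodule.map_id, range_mulVecLin_replicateCol, coordSubspace_insert]

lemma reach_modeMatrix_inputMatrix (π : List (Fin m)) :
    reach (modeMatrix k) (inputMatrix k) π = coordSubspace ℝ (π.foldl supportStep ∅) := by
  rw [reach, ← coordSubspace_empty]
  exact List.foldl_hom _ fun T i => map_modeMatrix_sup_range_inputMatrix T i

def supportWeight (T : Finset (Fin (k + 1))) : ℕ :=
  ∑ t ∈ T, (k + 1 - t)

lemma supportWeight_supportStep_le (T : Finset (Fin (k + 1))) (i : Fin m) :
    supportWeight (supportStep T i) ≤ supportWeight T + 1 := by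
  unfold supportStep supportWeight
  split_ifs with h
  · exact sum_image_swap_le (by simp only [Fin.castSucc_mk, Fin.succ_mk]; omega)
      (by simp only [Fin.castSucc_mk, Fin.succ_mk]; omega) T
  · simpa using sum_insert_le_add (fun t : Fin (k + 1) => k + 1 - t) (Fin.last k) T

lemma supportWeight_univ :
    supportWeight (univ : Finset (Fin (k + 1))) = (k + 1) * (k + 2) / 2 := by
  rw [supportWeight, Fin.sum_univ_eq_sum_range (fun t => k + 1 - t), ← sum_range_reflect,
    ← sum_range_add_one]
  refine sum_congr rfl fun i hi => ?_
  have := mem_range.1 hi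
  omega

lemma exists_foldl_supportStep_erase (hkm : k ≤ m) {F : Finset (Fin (k + 1))} (a : Fin (k + 1))
    (ha : ∀ t, a ≤ t → t ∈ F) :
    ∃ w : List (Fin m), w.length = k - a ∧
      w.foldl supportStep (F.erase a) = F.erase (Fin.last k) := by
  induction a using Fin.reverseInduction with
  | last => exact ⟨[], by simp, rfl⟩
  | cast j ih =>
    obtain ⟨w, hlen, hw⟩ := ih fun t ht => ha t (j.castSucc_lt_succ.le.trans ht)
    refine ⟨j.castLE hkm :: w, ?_, ?_⟩
    · simp only [List.length_cons, hlen, Fin.val_succ, Fin.val_castSucc]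
      omega
    have hstep : supportStep (F.erase j.castSucc) (j.castLE hkm) = F.erase j.succ := by
      rw [supportStep, dif_pos (by simp)]
      exact image_swap_erase (ha _ le_rfl) (ha _ j.castSucc_lt_succ.le)
    rw [List.foldl_cons, hstep, hw]

variable (k) in
def topCoords (d : ℕ) : Finset (Fin (k + 1)) :=
  univ.filter fun t => k + 1 ≤ t + d

lemma topCoords_self : topCoords k (k + 1) = univ := by
  ext t
  simp [topCoords]

lemma exists_foldl_topCoords_succ (hkm : k < m) {d : ℕ} (hd : d ≤ k) :
    ∃ w : List (Fin m), w.length = d + 1 ∧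
      w.foldl supportStep (topCoords k d) = topCoords k (d + 1) := by
  let a : Fin (k + 1) := ⟨k - d, by omega⟩
  have herase : topCoords k d = (topCoords k (d + 1)).erase a := by
    ext t
    simp only [topCoords, mem_erase, mem_filter, mem_univ, true_and, ne_eq, Fin.ext_iff, a]
    omega
  have hmem : ∀ t, a ≤ t → t ∈ topCoords k (d + 1) := fun t (ht : k - d ≤ t) => by
    simp only [topCoords, mem_filter, mem_univ, true_and]
    omega
  obtain ⟨w, hlen, hw⟩ := exists_foldl_supportStep_erase (m := m) hkm.le a hmem
  refine ⟨w ++ [⟨k, hkm⟩], ?_, ?_⟩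
  · simp only [List.length_append, List.length_singleton, hlen, a]
    omega
  rw [List.foldl_concat, herase, hw, supportStep, dif_neg (lt_irrefl k), insert_erase]
  simp [topCoords]

lemma exists_foldl_topCoords (hkm : k < m) {d : ℕ} (hd : d ≤ k + 1) :
    ∃ π : List (Fin m), π.length = ∑ i ∈ range d, (i + 1) ∧
      π.foldl supportStep ∅ = topCoords k d := by
  induction d with
  | zero => exact ⟨[], rfl, by ext t; simp [topCoords, t.is_le]⟩
  | succ d ih =>
    obtain ⟨π, hlen, hπ⟩ := ih (by omega)
    obtain ⟨w, hwlen, hw⟩ := exists_foldl_topCoords_succ hkm (by omega : d ≤ k)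
    exact ⟨π ++ w, by rw [List.length_append, hlen, hwlen, sum_range_succ],
      by rw [List.foldl_append, hπ, hw]⟩

end BubbleSystem

/-- For `m > n ≥ 1` there is a controllable system (with invertible `A_i`) whose
shortest controllable sequences have length exactly `n(n+1)/2`. -/
theorem stmt10 (n m : ℕ) (hn : 1 ≤ n) (hmn : n < m) :
    ∃ (A : Fin m → Matrix (Fin n) (Fin n) ℝ) (B : Fin m → Matrix (Fin n) (Fin 1) ℝ),
      (∀ i, IsUnit (A i)) ∧
      (⋃ π : List (Fin m), (reach A B π : Set (Fin n → ℝ))) = Set.univ ∧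
      (∃ π : List (Fin m), reach A B π = ⊤ ∧ π.length = n * (n + 1) / 2) ∧
      (∀ π : List (Fin m), reach A B π = ⊤ → n * (n + 1) / 2 ≤ π.length) := by
  obtain ⟨k, rfl⟩ : ∃ k, n = k + 1 := ⟨n - 1, by omega⟩
  obtain ⟨π, hlen, hπ⟩ := exists_foldl_topCoords (m := m) (by omega : k < m) le_rfl
  have hreach : reach (modeMatrix k) (inputMatrix k) π = ⊤ := by
    rw [reach_modeMatrix_inputMatrix, hπ, topCoords_self, coordSubspace_univ]
  refine ⟨modeMatrix k, inputMatrix k, isUnit_modeMatrix, ?_, ⟨π, hreach, ?_⟩,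
    fun π' h => ?_⟩
  · exact Set.eq_univ_of_univ_subset (Set.subset_iUnion_of_subset π (by simp [hreach]))
  · rw [hlen, sum_range_add_one]
  · rw [reach_modeMatrix_inputMatrix, coordSubspace_eq_top_iff] at h
    have := List.foldl_le_add_length supportWeight supportWeight_supportStep_le π'
      (∅ : Finset (Fin (k + 1)))
    rwa [h, supportWeight_univ, supportWeight, sum_empty, zero_add] at this
end

section
/- Let 1 ≤ r < n and let M ∈ ℝ^{n×n} be invertible. Write M in block form M = [[A, B],[C, D]] with A ∈ ℝ^{r×r}, B ∈ ℝ^{r×(n-r)}, C ∈ ℝ^{(n-r)×r}, D ∈ ℝ^{(n-r)×(n-r)}. For P ∈ ℝ^{r×(n-r)}, the bottom-right (n-r)×(n-r) block of Q^{-1} M Q, where Q = [[Id_r, P],[0, Id_{n-r}]], equals CP + D, and the set M = { P ∈ ℝ^{r×(n-r)} : CP + D is invertible } is open and dense in ℝ^{r×(n-r)}. -/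
open Filter Polynomial Topology

namespace LinearMap

variable {K V W : Type*} [Field K] [AddCommGroup V] [Module K V] [FiniteDimensional K V]
  [AddCommGroup W] [Module K W]

theorem exists_injective_comp_add (c : W →ₗ[K] V) (d : V →ₗ[K] V)
    (h : range c ⊔ range d = ⊤) : ∃ p : V →ₗ[K] W, Function.Injective (c ∘ₗ p + d) := by
  have hqc : range ((range d).mkQ ∘ₗ c) = ⊤ := by
    rw [range_comp, Submodule.map_mkQ_eq_top, sup_comm, h]
  obtain ⟨s, hs⟩ := ((range d).mkQ ∘ₗ c).exists_rightInverse_of_surjective hqc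
  obtain ⟨U, hU⟩ := (ker d).exists_isCompl
  have hdim : Module.finrank K (ker d) = Module.finrank K (V ⧸ range d) := by
    have := (range d).finrank_quotient_add_finrank
    have := d.finrank_range_add_finrank_ker
    omega
  let e := LinearEquiv.ofFinrankEq _ _ hdim
  refine ⟨s ∘ₗ e.toLinearMap ∘ₗ (ker d).projectionOnto U hU, ?_⟩
  rw [← ker_eq_bot, eq_bot_iff]
  intro x hx
  have hπ : (ker d).projectionOnto U hU x = 0 := by
    have hsx := LinearMap.congr_fun hs (e ((ker d).projectionOnto U hU x))
    have hdx : (range d).mkQ (d x) = 0 :=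
      (Submodule.Quotient.mk_eq_zero _).mpr (mem_range_self d x)
    have := congrArg (range d).mkQ hx
    simp only [comp_apply, id_apply, add_apply, map_add, hdx, add_zero, map_zero,
      LinearEquiv.coe_coe] at hsx this
    rw [hsx] at this
    exact e.map_eq_zero_iff.mp this
  have hxU : x ∈ U := (Submodule.projectionOnto_apply_eq_zero_iff hU).mp hπ
  have hxker : x ∈ ker d := by simpa [hπ] using hx
  exact hU.disjoint.le_bot ⟨hxker, hxU⟩

end LinearMap

namespace Matrix

variable {m n R K : Type*} [Fintype m] [Fintype n] [DecidableEq n]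

theorem fromBlocks_one_one_inv [DecidableEq m] [CommRing R] (P : Matrix m n R) :
    (fromBlocks 1 P 0 1 : Matrix (m ⊕ n) (m ⊕ n) R)⁻¹ = fromBlocks 1 (-P) 0 1 :=
  inv_eq_right_inv (by simp [fromBlocks_multiply, fromBlocks_one])

theorem toBlocks₂₂_fromBlocks_inv_mul_mul_fromBlocks [DecidableEq m] [CommRing R]
    (M : Matrix (m ⊕ n) (m ⊕ n) R) (P : Matrix m n R) :
    ((fromBlocks 1 P 0 1)⁻¹ * M * fromBlocks 1 P 0 1).toBlocks₂₂ =
      M.toBlocks₂₁ * P + M.toBlocks₂₂ := by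
  rw [fromBlocks_one_one_inv, ← fromBlocks_toBlocks M]
  simp [fromBlocks_multiply]

theorem range_toBlocks₂₁_sup_range_toBlocks₂₂ [DecidableEq m] [CommRing R]
    {M : Matrix (m ⊕ n) (m ⊕ n) R} (hM : IsUnit M) :
    LinearMap.range M.toBlocks₂₁.mulVecLin ⊔ LinearMap.range M.toBlocks₂₂.mulVecLin = ⊤ := by
  refine eq_top_iff.mpr fun y _ ↦ ?_
  obtain ⟨z, hz⟩ := mulVec_surjective_iff_isUnit.mpr hM (Sum.elim 0 y)
  rw [← fromBlocks_toBlocks M, fromBlocks_mulVec] at hz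
  exact Submodule.mem_sup.mpr ⟨_, ⟨z ∘ Sum.inl, rfl⟩, _, ⟨z ∘ Sum.inr, rfl⟩,
    by simpa using congrArg (· ∘ Sum.inr) hz⟩

theorem exists_isUnit_mul_add [Field K] (C : Matrix n m K) (D : Matrix n n K)
    (h : LinearMap.range C.mulVecLin ⊔ LinearMap.range D.mulVecLin = ⊤) :
    ∃ P : Matrix m n K, IsUnit (C * P + D) := by
  obtain ⟨p, hp⟩ := C.mulVecLin.exists_injective_comp_add D.mulVecLin h
  refine ⟨LinearMap.toMatrix' p, mulVec_injective_iff_isUnit.mp ?_⟩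
  convert hp using 1
  ext v : 1
  simp [add_mulVec, ← mulVec_mulVec, LinearMap.toMatrix'_mulVec]

theorem isOpen_setOf_isUnit [Field K] [TopologicalSpace K] [IsTopologicalRing K] [T1Space K] :
    IsOpen {A : Matrix n n K | IsUnit A} := by
  have : {A : Matrix n n K | IsUnit A} = det ⁻¹' {0}ᶜ :=
    Set.ext fun A ↦ (isUnit_iff_isUnit_det A).trans isUnit_iff_ne_zero
  exact this ▸ isOpen_compl_singleton.preimage continuous_id.matrix_det

theorem eval_det_X_smul_add [CommRing R] (A B : Matrix n n R) (t : R) :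
    eval t (det ((X : R[X]) • B.map C + A.map C)) = det (A + t • B) := by
  rw [← coe_evalRingHom, RingHom.map_det]
  congr 1
  ext i j
  simp only [RingHom.mapMatrix_apply, coe_evalRingHom, map_apply, add_apply, smul_apply,
    smul_eq_mul, X_mul_C, eval_add, eval_mul, eval_C, eval_X]
  ring

theorem finite_setOf_not_isUnit_add_smul [Field K] (A B : Matrix n n K) (h : IsUnit (A + B)) :
    {t : K | ¬IsUnit (A + t • B)}.Finite := by
  have hp : det ((X : K[X]) • B.map C + A.map C) ≠ 0 := fun h0 ↦ by
    have := eval_det_X_smul_add A B 1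
    rw [h0, one_smul] at this
    simp [isUnit_iff_isUnit_det, ← this] at h
  refine (finite_setOfPred_isRoot hp).subset fun t ht ↦ ?_
  simpa [IsRoot, eval_det_X_smul_add, isUnit_iff_isUnit_det] using ht

theorem dense_setOf_isUnit_mul_add {𝕜 : Type*} [NontriviallyNormedField 𝕜]
    (C : Matrix n m 𝕜) (D : Matrix n n 𝕜) (h : ∃ P : Matrix m n 𝕜, IsUnit (C * P + D)) :
    Dense {P : Matrix m n 𝕜 | IsUnit (C * P + D)} := by
  obtain ⟨P₁, hP₁⟩ := h
  intro (P₀ : Matrix m n 𝕜)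
  have hline : ∀ t : 𝕜, C * (P₀ + t • (P₁ - P₀)) + D = C * P₀ + D + t • (C * (P₁ - P₀)) :=
    fun t ↦ by rw [Matrix.mul_add, Matrix.mul_smul]; abel
  have hbad := finite_setOf_not_isUnit_add_smul (C * P₀ + D) (C * (P₁ - P₀))
    (by rw [← one_smul 𝕜 (C * (P₁ - P₀)), ← hline, one_smul, add_sub_cancel]; exact hP₁)
  have hlim : Tendsto (fun t : 𝕜 ↦ P₀ + t • (P₁ - P₀)) (𝓝[≠] 0) (𝓝 P₀) :=
    ((continuous_const.add (continuous_id.smul continuous_const)).tendsto' 0 P₀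
      (by simp)).mono_left nhdsWithin_le_nhds
  refine mem_closure_of_tendsto hlim ?_
  filter_upwards [hbad.eventually_cofinite_notMem.filter_mono (nhdsNE_le_cofinite 0)] with t ht
  simpa [hline] using ht

end Matrix

theorem stmt12_general (n r : ℕ)
    (M : Matrix (Fin r ⊕ Fin (n - r)) (Fin r ⊕ Fin (n - r)) ℝ)
    (hM : IsUnit M) :
    (∀ P : Matrix (Fin r) (Fin (n - r)) ℝ,
      ((Matrix.fromBlocks 1 P 0 1)⁻¹ * M * Matrix.fromBlocks 1 P 0 1).toBlocks₂₂
        = M.toBlocks₂₁ * P + M.toBlocks₂₂) ∧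
    IsOpen {P : Matrix (Fin r) (Fin (n - r)) ℝ |
      IsUnit (M.toBlocks₂₁ * P + M.toBlocks₂₂)} ∧
    Dense {P : Matrix (Fin r) (Fin (n - r)) ℝ |
      IsUnit (M.toBlocks₂₁ * P + M.toBlocks₂₂)} :=
  ⟨M.toBlocks₂₂_fromBlocks_inv_mul_mul_fromBlocks,
    Matrix.isOpen_setOf_isUnit.preimage (by fun_prop),
    Matrix.dense_setOf_isUnit_mul_add _ _ <|
      Matrix.exists_isUnit_mul_add _ _ (Matrix.range_toBlocks₂₁_sup_range_toBlocks₂₂ hM)⟩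

/-- For an invertible matrix `M`, conjugating by `Q = [[Id, P],[0, Id]]` has
bottom-right block `CP + D`, and the set of `P` making this block invertible is
open and dense. -/
theorem stmt12 (n r : ℕ) (hr : 1 ≤ r) (hrn : r < n)
    (M : Matrix (Fin r ⊕ Fin (n - r)) (Fin r ⊕ Fin (n - r)) ℝ)
    (hM : IsUnit M) :
    (∀ P : Matrix (Fin r) (Fin (n - r)) ℝ,
      ((Matrix.fromBlocks 1 P 0 1)⁻¹ * M * Matrix.fromBlocks 1 P 0 1).toBlocks₂₂
        = M.toBlocks₂₁ * P + M.toBlocks₂₂) ∧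
    IsOpen {P : Matrix (Fin r) (Fin (n - r)) ℝ |
      IsUnit (M.toBlocks₂₁ * P + M.toBlocks₂₂)} ∧
    Dense {P : Matrix (Fin r) (Fin (n - r)) ℝ |
      IsUnit (M.toBlocks₂₁ * P + M.toBlocks₂₂)} :=
  stmt12_general n r M hM
end

section
/- Let 1 ≤ r < n, C ∈ ℝ^{(n-r)×r} and D ∈ ℝ^{(n-r)×(n-r)}. If the (n-r)×n matrix (C D) obtained by horizontal concatenation has rank n - r, then there exists P ∈ ℝ^{r×(n-r)} such that CP + D is invertible. -/
/-
The rank condition says range C + range D = ℝ^(n-r), so some subspace S ≤ range C is a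
complement of range D, and then dim S = dim ker D. Take ψ mapping ker D isomorphically onto S and
lift it through C as ψ = C P. Then CP + D = ψ + D is injective: ψ and D have independent ranges, and
their kernels meet trivially.
-/

open LinearMap Module Submodule

theorem exists_le_isCompl_of_sup_eq_top {α : Type*} [Lattice α] [BoundedOrder α]
    [IsModularLattice α] [ComplementedLattice α] {a b : α} (h : a ⊔ b = ⊤) :
    ∃ c ≤ a, IsCompl c b := by
  obtain ⟨c, hdisj, hsup⟩ :=
    IsModularLattice.exists_disjoint_and_sup_eq (inf_le_left : a ⊓ b ≤ a)
  have hca : c ≤ a := hsup ▸ le_sup_right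
  refine ⟨c, hca, ?_, ?_⟩
  · exact fun x hxc hxb ↦ hdisj (le_inf (hxc.trans hca) hxb) hxc
  · rw [codisjoint_iff, eq_top_iff, ← h, ← hsup]
    exact sup_le (sup_le (inf_le_right.trans le_sup_right) le_sup_left) le_sup_right

theorem LinearMap.injective_add_of_disjoint {R M N : Type*} [Ring R] [AddCommGroup M] [Module R M]
    [AddCommGroup N] [Module R N] {f g : M →ₗ[R] N} (hrange : Disjoint (range f) (range g))
    (hker : Disjoint (ker f) (ker g)) : Function.Injective (f + g) := by
  rw [← ker_eq_bot, eq_bot_iff]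
  intro x hx
  have hfg : f x = -g x := eq_neg_of_add_eq_zero_left hx
  have hf : f x = 0 := (Submodule.disjoint_def.mp hrange) _ (mem_range_self f x)
    (hfg ▸ neg_mem (mem_range_self g x))
  have hg : g x = 0 := by simpa [hf] using hfg
  exact (Submodule.disjoint_def.mp hker) x hf hg

section

variable {K V W : Type*} [Field K] [AddCommGroup V] [Module K V] [AddCommGroup W] [Module K W]

theorem LinearMap.exists_comp_eq_of_range_le (g : W →ₗ[K] V) {ψ : V →ₗ[K] V}
    (h : range ψ ≤ range g) : ∃ φ : V →ₗ[K] W, g ∘ₗ φ = ψ := by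
  obtain ⟨φ, hφ⟩ := Module.projective_lifting_property g.rangeRestrict
    (ψ.codRestrict _ fun x ↦ h (mem_range_self ψ x)) g.surjective_rangeRestrict
  exact ⟨φ, by ext x; simpa using congr(($hφ x : V))⟩

theorem LinearMap.exists_range_le_and_disjoint_ker {A : Submodule K V} {S : Submodule K W}
    [FiniteDimensional K A] [FiniteDimensional K S] (h : finrank K A = finrank K S) :
    ∃ ψ : V →ₗ[K] W, range ψ ≤ S ∧ Disjoint (ker ψ) A := by
  obtain ⟨ψ, hψ⟩ := LinearMap.exists_extend (LinearEquiv.ofFinrankEq A S h : A →ₗ[K] S)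
  refine ⟨S.subtype ∘ₗ ψ, (range_comp_le_range _ _).trans S.range_subtype.le, ?_⟩
  refine Submodule.disjoint_def.mpr fun x hx hxA ↦ ?_
  have hψx : ψ x = 0 := by simpa using hx
  have : LinearEquiv.ofFinrankEq A S h ⟨x, hxA⟩ = 0 := by
    rw [← LinearEquiv.coe_coe, ← hψ]; exact hψx
  simpa using this

theorem LinearMap.exists_injective_comp_add_s13 [FiniteDimensional K V] (g : W →ₗ[K] V)
    (h : V →ₗ[K] V) (hgh : range g ⊔ range h = ⊤) :
    ∃ φ : V →ₗ[K] W, Function.Injective (g ∘ₗ φ + h) := by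
  obtain ⟨S, hSg, hS⟩ := exists_le_isCompl_of_sup_eq_top hgh
  have hrank : finrank K (ker h) = finrank K S := by
    have := Submodule.finrank_add_eq_of_isCompl hS
    have := finrank_range_add_finrank_ker h
    omega
  obtain ⟨ψ, hψS, hψ⟩ := LinearMap.exists_range_le_and_disjoint_ker hrank
  obtain ⟨φ, rfl⟩ := g.exists_comp_eq_of_range_le (hψS.trans hSg)
  exact ⟨φ, injective_add_of_disjoint (hS.disjoint.mono_left hψS) hψ⟩

end

theorem Matrix.range_mulVecLin_fromCols {R m n₁ n₂ : Type*} [CommSemiring R] [Fintype n₁]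
    [Fintype n₂] (C : Matrix m n₁ R) (D : Matrix m n₂ R) :
    range (Matrix.fromCols C D).mulVecLin = range C.mulVecLin ⊔ range D.mulVecLin := by
  simp only [Matrix.range_mulVecLin, ← Submodule.span_union, ← Set.Sum.elim_range]
  congr 2
  ext (i | i) <;> rfl

theorem stmt13_general (n r : ℕ)
    (C : Matrix (Fin (n - r)) (Fin r) ℝ) (D : Matrix (Fin (n - r)) (Fin (n - r)) ℝ)
    (hrank : (Matrix.fromCols C D).rank = n - r) :
    ∃ P : Matrix (Fin r) (Fin (n - r)) ℝ, IsUnit (C * P + D) := by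
  have hCD : range C.mulVecLin ⊔ range D.mulVecLin = ⊤ := by
    rw [← Matrix.range_mulVecLin_fromCols]
    exact Submodule.eq_top_of_finrank_eq (by rw [← Matrix.rank, hrank, finrank_fin_fun])
  obtain ⟨φ, hφ⟩ := C.mulVecLin.exists_injective_comp_add_s13 D.mulVecLin hCD
  refine ⟨toMatrix' φ, Matrix.mulVec_injective_iff_isUnit.mp ?_⟩
  rwa [← Matrix.coe_mulVecLin, Matrix.mulVecLin_add, Matrix.mulVecLin_mul,
    ← Matrix.toLin'_apply' (toMatrix' φ), Matrix.toLin'_toMatrix']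

/-- If the horizontal concatenation `(C D)` has full row rank `n - r`, then some
`P` makes `CP + D` invertible. -/
theorem stmt13 (n r : ℕ) (hr : 1 ≤ r) (hrn : r < n)
    (C : Matrix (Fin (n - r)) (Fin r) ℝ) (D : Matrix (Fin (n - r)) (Fin (n - r)) ℝ)
    (hrank : (Matrix.fromCols C D).rank = n - r) :
    ∃ P : Matrix (Fin r) (Fin (n - r)) ℝ, IsUnit (C * P + D) :=
  stmt13_general n r C D hrank
end

section
/- Let 1 ≤ r < n. Assume every matrix A_i (i = 1,…,m) is invertible and every matrix B_i has rank at least r. If the switched linear control system is controllable, then there exists a controllable switching sequence of length at most (n-r+1)(n-r)/2 + 1. -/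
/-!
Let `W_t` (`reachUpTo`) be the span of the reach spaces of all words of length at most `t`.
As long as `W_t ≠ V`, controllability forces `W_t ⊊ W_{t+1}`, so
`dim W_t ≥ dim W_1 + t - 1 ≥ r + t - 1`. Given a word `x u` (`x` applied first) whose reach
space has dimension `d < n`, one can replace `x` and prepend at most `d - r + 1` letters so that
the dimension grows. Otherwise, for `t = d - r + 1`, the transition map of `x u` sends `W_t`
into `R(x u)`, so `dim W_t = d` and `dim W_1 = r`. Then every `Im B_i` equals `W_1`, so `R(y u)`
does not depend on `y`, and all the images `A_y W_t` coincide with one space `T ⊇ W_1`;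
hence `W_{t+1} ⊆ T` while `dim T = dim W_t`, which stops the growth of `W`.
Raising the dimension from `r` to `n` in this way, starting from a single letter, costs
`1 + 2 + ⋯ + (n - r)` further letters.
-/

namespace SwitchedLinear

open Module Submodule Function

variable {K V ι : Type*} [DivisionRing K] [AddCommGroup V] [Module K V]

/-- `reach A B` is, by definition,
`reachSpace (fun i => (A i).mulVecLin) (fun i => LinearMap.range (B i).mulVecLin)`. -/
def reachSpace (f : ι → V →ₗ[K] V) (U : ι → Submodule K V) (π : List ι) : Submodule K V :=
  π.foldl (fun S i => S.map (f i) ⊔ U i) ⊥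

def transitionMap (f : ι → V →ₗ[K] V) : List ι → V →ₗ[K] V
  | [] => LinearMap.id
  | i :: π => transitionMap f π ∘ₗ f i

def reachUpTo (f : ι → V →ₗ[K] V) (U : ι → Submodule K V) (L : ℕ) : Submodule K V :=
  ⨆ (π : List ι) (_ : π.length ≤ L), reachSpace f U π

variable {f : ι → V →ₗ[K] V} {U : ι → Submodule K V}

theorem transitionMap_injective (hf : ∀ i, Injective (f i)) (π : List ι) :
    Injective (transitionMap f π) := by
  induction π with
  | nil => exact injective_id
  | cons i π ih => exact ih.comp (hf i)

theorem foldl_reachSpace_step (u : List ι) (S : Submodule K V) :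
    u.foldl (fun S i => S.map (f i) ⊔ U i) S = S.map (transitionMap f u) ⊔ reachSpace f U u := by
  induction u generalizing S with
  | nil => simp [reachSpace, transitionMap]
  | cons i u ih =>
    rw [reachSpace, List.foldl_cons, List.foldl_cons, ih, ih]
    simp only [transitionMap, Submodule.map_sup, Submodule.map_bot, bot_sup_eq, map_comp, sup_assoc]

theorem reachSpace_append (v u : List ι) :
    reachSpace f U (v ++ u) = (reachSpace f U v).map (transitionMap f u) ⊔ reachSpace f U u := by
  rw [reachSpace, List.foldl_append]
  exact foldl_reachSpace_step u _

theorem reachSpace_concat (v : List ι) (i : ι) :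
    reachSpace f U (v ++ [i]) = (reachSpace f U v).map (f i) ⊔ U i :=
  List.foldl_concat ..

theorem reachSpace_cons (i : ι) (u : List ι) :
    reachSpace f U (i :: u) = (U i).map (transitionMap f u) ⊔ reachSpace f U u := by
  rw [reachSpace, List.foldl_cons, foldl_reachSpace_step]
  simp

@[simp]
theorem reachSpace_singleton (i : ι) : reachSpace f U [i] = U i := by
  simp [reachSpace]

theorem reachSpace_le_reachUpTo {π : List ι} {L : ℕ} (h : π.length ≤ L) :
    reachSpace f U π ≤ reachUpTo f U L :=
  le_iSup₂_of_le π h le_rfl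

theorem reachUpTo_le_iff {L : ℕ} {S : Submodule K V} :
    reachUpTo f U L ≤ S ↔ ∀ π : List ι, π.length ≤ L → reachSpace f U π ≤ S :=
  iSup₂_le_iff

theorem reachUpTo_mono : Monotone (reachUpTo f U) :=
  fun _ _ h => reachUpTo_le_iff.2 fun _ hπ => reachSpace_le_reachUpTo (hπ.trans h)

theorem le_reachUpTo_one (i : ι) : U i ≤ reachUpTo f U 1 := by
  simpa using reachSpace_le_reachUpTo (f := f) (U := U) (π := [i]) le_rfl

theorem reachUpTo_succ (L : ℕ) :
    reachUpTo f U (L + 1) = ⨆ i, (reachUpTo f U L).map (f i) ⊔ U i := by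
  refine le_antisymm (reachUpTo_le_iff.2 fun π hπ => ?_) (iSup_le fun i => sup_le ?_ ?_)
  · rcases List.eq_nil_or_concat π with rfl | ⟨v, i, rfl⟩
    · exact bot_le
    · rw [List.concat_eq_append, reachSpace_concat]
      refine le_iSup_of_le i (sup_le_sup_right (map_mono (reachSpace_le_reachUpTo ?_)) _)
      simpa using hπ
  · refine map_le_iff_le_comap.2 (reachUpTo_le_iff.2 fun v hv => map_le_iff_le_comap.1 ?_)
    calc (reachSpace f U v).map (f i) ≤ reachSpace f U (v ++ [i]) := by
          rw [reachSpace_concat]; exact le_sup_left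
      _ ≤ _ := reachSpace_le_reachUpTo (by simpa using hv)
  · exact (le_reachUpTo_one i).trans (reachUpTo_mono (by omega))

theorem reachSpace_le_of_invariant {S : Submodule K V} (hS : ∀ i, S.map (f i) ⊔ U i ≤ S)
    (π : List ι) : reachSpace f U π ≤ S := by
  induction π using List.reverseRecOn with
  | nil => exact bot_le
  | append_singleton v i ih =>
    rw [reachSpace_concat]
    exact (sup_le_sup_right (map_mono ih) _).trans (hS i)

theorem eq_top_of_invariant (hctrl : ⨆ π, reachSpace f U π = ⊤) {S : Submodule K V}
    (hS : ∀ i, S.map (f i) ⊔ U i ≤ S) : S = ⊤ :=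
  top_le_iff.1 (hctrl ▸ iSup_le (reachSpace_le_of_invariant hS))

theorem reachUpTo_eq_top_of_succ_le (hctrl : ⨆ π, reachSpace f U π = ⊤) {L : ℕ}
    (h : reachUpTo f U (L + 1) ≤ reachUpTo f U L) : reachUpTo f U L = ⊤ := by
  rw [reachUpTo_succ, iSup_le_iff] at h
  exact eq_top_of_invariant hctrl h

theorem finrank_map_of_injective {W : Type*} [AddCommGroup W] [Module K W] {g : V →ₗ[K] W}
    (hg : Injective g) (S : Submodule K V) :
    finrank K (S.map g) = finrank K S :=
  (equivMapOfInjective g hg S).finrank_eq.symm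

section FiniteDimensional

variable [FiniteDimensional K V]

theorem finrank_reachUpTo_add_le (hctrl : ⨆ π, reachSpace f U π = ⊤) {a b : ℕ} (hab : a ≤ b)
    (hb : reachUpTo f U b ≠ ⊤) :
    finrank K (reachUpTo f U a) + (b - a) ≤ finrank K (reachUpTo f U b) := by
  induction b, hab using Nat.le_induction with
  | base => simp
  | succ b hab ih =>
    have hb' : reachUpTo f U b ≠ ⊤ := fun h => hb (top_le_iff.1 (h ▸ reachUpTo_mono b.le_succ))
    have hlt : reachUpTo f U b < reachUpTo f U (b + 1) :=
      (reachUpTo_mono b.le_succ).lt_of_ne fun h => hb' (reachUpTo_eq_top_of_succ_le hctrl h.ge)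
    have := finrank_lt_finrank_of_lt hlt
    have := ih hb'
    omega

theorem map_reachUpTo_le_of_finrank_le {w : List ι} {t : ℕ}
    (h : ∀ v : List ι, v.length ≤ t →
      finrank K (reachSpace f U (v ++ w)) ≤ finrank K (reachSpace f U w)) :
    (reachUpTo f U t).map (transitionMap f w) ≤ reachSpace f U w := by
  refine map_le_iff_le_comap.2 (reachUpTo_le_iff.2 fun v hv => map_le_iff_le_comap.1 ?_)
  have hext : reachSpace f U w = reachSpace f U (v ++ w) :=
    eq_of_le_of_finrank_le (by rw [reachSpace_append]; exact le_sup_right) (h v hv)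
  rw [hext, reachSpace_append]
  exact le_sup_left

theorem reachUpTo_eq_top_of_map_eq (hctrl : ⨆ π, reachSpace f U π = ⊤) {t : ℕ} {i₀ : ι}
    (hf : Injective (f i₀))
    (hmap : ∀ i, (reachUpTo f U t).map (f i) = (reachUpTo f U t).map (f i₀))
    (hU : ∀ i, U i ≤ (reachUpTo f U t).map (f i₀)) : reachUpTo f U t = ⊤ := by
  have hsucc : reachUpTo f U (t + 1) ≤ (reachUpTo f U t).map (f i₀) := by
    rw [reachUpTo_succ]
    exact iSup_le fun i => sup_le (hmap i).le (hU i)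
  have hfix : reachUpTo f U t = (reachUpTo f U t).map (f i₀) :=
    eq_of_le_of_finrank_le ((reachUpTo_mono t.le_succ).trans hsucc)
      (finrank_map_of_injective hf _).le
  exact reachUpTo_eq_top_of_succ_le hctrl (hfix ▸ hsucc)

theorem exists_finrank_lt_reachSpace_append_cons (hctrl : ⨆ π, reachSpace f U π = ⊤)
    (hf : ∀ i, Injective (f i)) {r : ℕ} (hU : ∀ i, r ≤ finrank K (U i)) (x : ι) (u : List ι)
    (hr : r ≤ finrank K (reachSpace f U (x :: u)))
    (hlt : finrank K (reachSpace f U (x :: u)) < finrank K V) :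
    ∃ (y : ι) (v : List ι), v.length ≤ finrank K (reachSpace f U (x :: u)) - r + 1 ∧
      finrank K (reachSpace f U (x :: u)) < finrank K (reachSpace f U (v ++ y :: u)) := by
  set d := finrank K (reachSpace f U (x :: u))
  set t := d - r + 1
  by_contra! hcon
  have hP := transitionMap_injective hf u
  have hmap : ∀ y, reachSpace f U (y :: u) = reachSpace f U (x :: u) →
      (reachUpTo f U t).map (transitionMap f (y :: u)) ≤ reachSpace f U (x :: u) := by
    intro y hy
    rw [← hy]
    exact map_reachUpTo_le_of_finrank_le fun v hv => hy ▸ hcon y v hv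
  have hWt : finrank K (reachUpTo f U t) ≤ d := by
    simpa only [finrank_map_of_injective (transitionMap_injective hf _)]
      using finrank_mono (hmap x rfl)
  have hne : reachUpTo f U t ≠ ⊤ := fun h => by
    rw [h, finrank_top] at hWt
    omega
  have hgrow := finrank_reachUpTo_add_le hctrl (show 1 ≤ t by omega) hne
  have hW1 : r ≤ finrank K (reachUpTo f U 1) := (hU x).trans (finrank_mono (le_reachUpTo_one x))
  have hUeq : ∀ i, U i = reachUpTo f U 1 := fun i =>
    eq_of_le_of_finrank_le (le_reachUpTo_one i) (by have := hU i; omega)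
  have hcons : ∀ y, reachSpace f U (y :: u) =
      (reachUpTo f U 1).map (transitionMap f u) ⊔ reachSpace f U u := by
    intro y
    rw [reachSpace_cons, hUeq]
  have himage :
      ∀ y, (reachUpTo f U t).map (transitionMap f (y :: u)) = reachSpace f U (x :: u) :=
    fun y => eq_of_le_of_finrank_le (hmap y (by rw [hcons, hcons]))
      (by rw [finrank_map_of_injective (transitionMap_injective hf _)]; omega)
  simp only [transitionMap, map_comp] at himage
  refine hne (reachUpTo_eq_top_of_map_eq hctrl (hf x)
    (fun y => map_injective_of_injective hP ((himage y).trans (himage x).symm)) fun i => ?_)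
  rw [hUeq, ← map_le_map_iff_of_injective hP, himage x, hcons x]
  exact le_sup_left

theorem exists_reachSpace_finrank_ge [Nonempty ι] (hctrl : ⨆ π, reachSpace f U π = ⊤)
    (hf : ∀ i, Injective (f i)) {r : ℕ} (hU : ∀ i, r ≤ finrank K (U i)) {s : ℕ}
    (hs : r + s ≤ finrank K V) :
    ∃ w : List ι, w ≠ [] ∧ 2 * w.length ≤ 2 + s * (s + 1) ∧
      r + s ≤ finrank K (reachSpace f U w) := by
  induction s with
  | zero =>
    obtain ⟨i⟩ := ‹Nonempty ι›
    exact ⟨[i], List.cons_ne_nil _ _, by simp, by rw [reachSpace_singleton]; exact hU i⟩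
  | succ s ih =>
    obtain ⟨w, hw, hlen, hrank⟩ := ih (by omega)
    obtain ⟨x, u, rfl⟩ := List.exists_cons_of_ne_nil hw
    have hsq : (s + 1) * (s + 1 + 1) = s * (s + 1) + 2 * (s + 1) := by ring
    rcases hrank.lt_or_eq with hgt | heq
    · exact ⟨x :: u, hw, by omega, by omega⟩
    · obtain ⟨y, v, hv, hgt⟩ :=
        exists_finrank_lt_reachSpace_append_cons hctrl hf hU x u (by omega) (by omega)
      refine ⟨v ++ y :: u, by simp, ?_, by omega⟩
      simp only [List.length_append, List.length_cons] at hlen ⊢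
      omega

theorem exists_reachSpace_eq_top_length_le (hctrl : ⨆ π, reachSpace f U π = ⊤)
    (hf : ∀ i, Injective (f i)) {r : ℕ} (hU : ∀ i, r ≤ finrank K (U i)) (hr : r ≤ finrank K V) :
    ∃ π : List ι, reachSpace f U π = ⊤ ∧
      π.length ≤ (finrank K V - r + 1) * (finrank K V - r) / 2 + 1 := by
  cases isEmpty_or_nonempty ι
  · refine ⟨[], ?_, by simp⟩
    rw [← hctrl, iSup_unique]
    rfl
  · obtain ⟨w, -, hlen, hrank⟩ :=
      exists_reachSpace_finrank_ge hctrl hf hU (s := finrank K V - r) (by omega)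
    refine ⟨w, eq_top_of_finrank_eq (le_antisymm (finrank_le _) (by omega)), ?_⟩
    rw [Nat.mul_comm]
    generalize (finrank K V - r) * (finrank K V - r + 1) = e at hlen ⊢
    omega

end FiniteDimensional

end SwitchedLinear

theorem stmt14_general {n m : ℕ} (r : ℕ) (hrn : r < n)
    (A : Fin m → Matrix (Fin n) (Fin n) ℝ) {q : Fin m → ℕ}
    (B : ∀ i, Matrix (Fin n) (Fin (q i)) ℝ)
    (hA : ∀ i, IsUnit (A i))
    (hB : ∀ i, r ≤ (B i).rank)
    (hctrl : (⋃ π : List (Fin m), (reach A B π : Set (Fin n → ℝ))) = Set.univ) :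
    ∃ π : List (Fin m), reach A B π = ⊤ ∧
      π.length ≤ (n - r + 1) * (n - r) / 2 + 1 := by
  have hsup : ⨆ π, SwitchedLinear.reachSpace (fun i => (A i).mulVecLin)
      (fun i => LinearMap.range (B i).mulVecLin) π = ⊤ := by
    refine Submodule.eq_top_iff'.2 fun x => ?_
    obtain ⟨π, hπ⟩ := Set.mem_iUnion.1 (hctrl ▸ Set.mem_univ x)
    exact Submodule.mem_iSup_of_mem π hπ
  obtain ⟨π, htop, hlen⟩ := SwitchedLinear.exists_reachSpace_eq_top_length_le hsup
    (fun i => Matrix.mulVec_injective_iff_isUnit.2 (hA i)) hB (by simpa using hrn.le)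
  exact ⟨π, htop, by rwa [Module.finrank_fin_fun] at hlen⟩

/-- Rank-dependent bound: if all `A_i` are invertible and all `B_i` have rank at
least `r`, a controllable system admits a controllable sequence of length at most
`(n-r+1)(n-r)/2 + 1`. -/
theorem stmt14 {n m : ℕ} (hn : 1 ≤ n) (hm : 1 ≤ m) (r : ℕ) (hr : 1 ≤ r) (hrn : r < n)
    (A : Fin m → Matrix (Fin n) (Fin n) ℝ) {q : Fin m → ℕ}
    (B : ∀ i, Matrix (Fin n) (Fin (q i)) ℝ)
    (hA : ∀ i, IsUnit (A i))
    (hB : ∀ i, r ≤ (B i).rank)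
    (hctrl : (⋃ π : List (Fin m), (reach A B π : Set (Fin n → ℝ))) = Set.univ) :
    ∃ π : List (Fin m), reach A B π = ⊤ ∧
      π.length ≤ (n - r + 1) * (n - r) / 2 + 1 :=
  stmt14_general r hrn A B hA hB hctrl
end
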